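/- There exists ε ∈ (0, 1/L] such that the set Q = {p ∈ int Δ : ∑_{l=1}^L z_l(p) ≤ 0} is contained in the interior of the trimmed simplex Δ^ε; that is, every p with p_l > 0 for all l, ∑_l p_l = 1, and ∑_l z_l(p) ≤ 0 satisfies p_l > ε for all l. -/

import Mathlib

/-!
Every point of `Q` lies in the simplex, so the closure of `Q` is compact. A boundary point of the
simplex cannot be in that closure: along a sequence in `Q` tending to it the largest excess demand
would blow up, whereas on `Q` it is at most `(L - 1) s`, since each coordinate of `z` exceeds `-s`
and their sum is nonpositive. Hence the closure of `Q` is a compact subset of the open orthant, and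
so it stays uniformly away from the faces of the simplex.
-/

open Filter Topology

lemma IsCompact.eventually_forall_lt_apply {ι α : Type*} [Finite ι] [TopologicalSpace α]
    [LinearOrder α] [OrderClosedTopology α] {K : Set (ι → α)} (hK : IsCompact K) {a : α}
    (hK_gt : ∀ p ∈ K, ∀ i, a < p i) :
    ∀ᶠ b in 𝓝 a, ∀ p ∈ K, ∀ i, b < p i := by
  refine hK.eventually_forall_of_forall_eventually fun p hp => ?_
  have hopen : IsOpen {x : α × (ι → α) | ∀ i, x.1 < x.2 i} := by
    simp only [Set.ofPred_forall]
    exact isOpen_iInter_of_finite fun i =>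
      isOpen_lt continuous_fst ((continuous_apply i).comp continuous_snd)
  exact hopen.mem_nhds (hK_gt p hp)

lemma le_card_sub_one_mul_of_sum_nonpos {ι : Type*} [Fintype ι] {f : ι → ℝ} {s : ℝ}
    (hf : ∀ i, -s ≤ f i) (hsum : ∑ i, f i ≤ 0) (j : ι) :
    f j ≤ (Fintype.card ι - 1) * s := by
  have hj : f j + s ≤ ∑ i, (f i + s) :=
    Finset.single_le_sum (f := fun i => f i + s) (fun i _ => by linarith [hf i])
      (Finset.mem_univ j)
  rw [Finset.sum_add_distrib, Finset.sum_const, Finset.card_univ, nsmul_eq_mul] at hj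
  linarith

section ExcessDemand

variable {ι : Type*} [Fintype ι] (z : (ι → ℝ) → (ι → ℝ))

/-- The set `Q` of the paper. -/
def sumExcessNonposSet : Set (ι → ℝ) :=
  {p | (∀ i, 0 < p i) ∧ ∑ i, p i = 1 ∧ ∑ i, z p i ≤ 0}

lemma closure_sumExcessNonposSet_subset_stdSimplex :
    closure (sumExcessNonposSet z) ⊆ stdSimplex ℝ ι :=
  closure_minimal (fun _ hp => ⟨fun i => (hp.1 i).le, hp.2.1⟩) (isClosed_stdSimplex ℝ ι)

lemma isCompact_closure_sumExcessNonposSet : IsCompact (closure (sumExcessNonposSet z)) :=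
  (isCompact_stdSimplex ℝ ι).of_isClosed_subset isClosed_closure
    (closure_sumExcessNonposSet_subset_stdSimplex z)

variable {z}

lemma pos_of_mem_closure_sumExcessNonposSet {s : ℝ}
    (hz_gt : ∀ p : ι → ℝ, (∀ i, 0 < p i) → ∀ i, -s < z p i)
    (hz_boundary : ∀ (pn : ℕ → ι → ℝ) (p : ι → ℝ),
      (∀ n i, 0 < pn n i) → Tendsto pn atTop (𝓝 p) → p ≠ 0 → (∃ i, p i = 0) →
      Tendsto (fun n => ⨆ i, z (pn n) i) atTop atTop)
    {p : ι → ℝ} (hp : p ∈ closure (sumExcessNonposSet z)) (i : ι) : 0 < p i := by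
  have hp_simplex := closure_sumExcessNonposSet_subset_stdSimplex z hp
  by_contra! hpi
  have hp0 : p ≠ 0 := by
    rintro rfl
    simpa using hp_simplex.2
  obtain ⟨q, hqQ, hq⟩ := mem_closure_iff_seq_limit.mp hp
  have : Nonempty ι := ⟨i⟩
  have hbdd (n : ℕ) : ⨆ j, z (q n) j ≤ (Fintype.card ι - 1) * s :=
    ciSup_le <| le_card_sub_one_mul_of_sum_nonpos (fun j => (hz_gt _ (hqQ n).1 j).le) (hqQ n).2.2
  have hblowup := hz_boundary q p (fun n => (hqQ n).1) hq hp0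
    ⟨i, le_antisymm hpi (hp_simplex.1 i)⟩
  obtain ⟨n, hn⟩ := (hblowup.eventually_gt_atTop ((Fintype.card ι - 1) * s)).exists
  exact (hbdd n).not_gt hn

end ExcessDemand

theorem Q_subset_int_trimmed_simplex_general (L : ℕ) (hL : 1 ≤ L)
    (z : (Fin L → ℝ) → (Fin L → ℝ))
    (hA4 : ∃ s : ℝ, 0 < s ∧ ∀ p : Fin L → ℝ, (∀ l, 0 < p l) → ∀ l, -s < z p l)
    (hA5 : ∀ (pn : ℕ → Fin L → ℝ) (p : Fin L → ℝ),
      (∀ n l, 0 < pn n l) → Tendsto pn atTop (𝓝 p) → p ≠ 0 → (∃ l, p l = 0) →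
      Tendsto (fun n => ⨆ l, z (pn n) l) atTop atTop) :
    ∃ ε : ℝ, 0 < ε ∧ ε ≤ 1 / (L : ℝ) ∧
      ∀ p : Fin L → ℝ, (∀ l, 0 < p l) → (∑ l, p l) = 1 → (∑ l, z p l) ≤ 0 →
        ∀ l, ε < p l := by
  obtain ⟨s, -, hs⟩ := hA4
  have hL_inv : (0 : ℝ) < 1 / L := by
    have : (0 : ℝ) < L := by exact_mod_cast hL
    positivity
  have hsmall := (isCompact_closure_sumExcessNonposSet z).eventually_forall_lt_apply
    fun p hp => pos_of_mem_closure_sumExcessNonposSet hs hA5 hp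
  obtain ⟨ε, ⟨hεQ, hεL⟩, hε⟩ :=
    ((hsmall.and (eventually_le_nhds hL_inv)).filter_mono nhdsWithin_le_nhds |>.and
      (self_mem_nhdsWithin : ∀ᶠ ε in 𝓝[>] (0 : ℝ), 0 < ε)).exists
  exact ⟨ε, hε, hεL, fun p hp hsum hz => hεQ p (subset_closure ⟨hp, hsum, hz⟩)⟩

/-- Lemma 1: there is an `ε ∈ (0, 1/L]` such that the set
`Q = {p ∈ int Δ : ∑ l, z l p ≤ 0}` is contained in the interior of the trimmed
simplex `Δ^ε`, i.e. every such `p` satisfies `p l > ε` for all `l`. -/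
theorem Q_subset_int_trimmed_simplex (L : ℕ) (hL : 1 ≤ L)
    (z : (Fin L → ℝ) → (Fin L → ℝ))
    (hA1 : ContinuousOn z {p : Fin L → ℝ | ∀ l, 0 < p l})
    (hA2 : ∀ lam : ℝ, 0 < lam → ∀ p : Fin L → ℝ, (∀ l, 0 < p l) → z (lam • p) = z p)
    (hA3 : ∀ p : Fin L → ℝ, (∀ l, 0 < p l) → ∑ l, p l * z p l = 0)
    (hA4 : ∃ s : ℝ, 0 < s ∧ ∀ p : Fin L → ℝ, (∀ l, 0 < p l) → ∀ l, -s < z p l)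
    (hA5 : ∀ (pn : ℕ → Fin L → ℝ) (p : Fin L → ℝ),
      (∀ n l, 0 < pn n l) → Tendsto pn atTop (𝓝 p) → p ≠ 0 → (∃ l, p l = 0) →
      Tendsto (fun n => ⨆ l, z (pn n) l) atTop atTop) :
    ∃ ε : ℝ, 0 < ε ∧ ε ≤ 1 / (L : ℝ) ∧
      ∀ p : Fin L → ℝ, (∀ l, 0 < p l) → (∑ l, p l) = 1 → (∑ l, z p l) ≤ 0 →
        ∀ l, ε < p l :=
  Q_subset_int_trimmed_simplex_general L hL z hA4 hA5
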